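/- Let p : Fin 4 → ℝ be a probability vector and Φₙ the n-fold product channel of the Pauli channel 𝒩_p. Let E₀₁ be the matrix unit indexed by strings in Fin n → Fin 2 whose only nonzero entry is a 1 at (all-zeros string, all-ones string). Then Φₙ(E₀₁)(s,t) = (p₀−p₃)^{n−w(s)}·(p₁−p₂)^{w(s)} if t is the bitwise complement of s (i.e. t(i) = 1 − s(i) for all i), and Φₙ(E₀₁)(s,t) = 0 otherwise, where w(s) is the Hamming weight of s. -/

import Mathlib

open Matrix BigOperators

noncomputable section

/-- Matrix of the Kraus operator `K_u` acting on `n` systems. -/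
def krausAt {ι : Type*} {d n : ℕ} (K : ι → Matrix (Fin d) (Fin d) ℂ) (u : Fin n → ι) :
    Matrix (Fin n → Fin d) (Fin n → Fin d) ℂ :=
  Matrix.of fun s t => ∏ i, K (u i) (s i) (t i)

/-- The n-fold product (i.i.d.) channel of the Kraus operators `K`. -/
def prodChannel {ι : Type*} [Fintype ι] {d : ℕ} (K : ι → Matrix (Fin d) (Fin d) ℂ) (n : ℕ)
    (ρ : Matrix (Fin n → Fin d) (Fin n → Fin d) ℂ) :
    Matrix (Fin n → Fin d) (Fin n → Fin d) ℂ :=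
  ∑ u : Fin n → ι, krausAt K u * ρ * (krausAt K u)ᴴ

/-- The Pauli matrices. -/
def pauli : Fin 4 → Matrix (Fin 2) (Fin 2) ℂ
  | 0 => 1
  | 1 => !![0, 1; 1, 0]
  | 2 => !![0, -Complex.I; Complex.I, 0]
  | 3 => !![1, 0; 0, -1]

/-- Kraus operators of the Pauli channel with probabilities `p`. -/
def pauliKraus (p : Fin 4 → ℝ) (i : Fin 4) : Matrix (Fin 2) (Fin 2) ℂ :=
  (Real.sqrt (p i) : ℂ) • pauli i

/-- Hamming weight of a bit string. -/
def hamW {n : ℕ} (s : Fin n → Fin 2) : ℕ := (Finset.univ.filter fun i => s i = 1).card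

lemma mulE {m : Type*} [Fintype m] [DecidableEq m] (A B : Matrix m m ℂ) (a b s t : m) :
    (A * single a b (1:ℂ) * B : Matrix m m ℂ) s t = A s a * B b t := by
  rw [Matrix.mul_assoc]
  simp [Matrix.mul_apply, Matrix.single, ite_and, Finset.mul_sum]

lemma site (p : Fin 4 → ℝ) (hp : ∀ i, 0 ≤ p i) (a b : Fin 2) :
    ∑ k : Fin 4, pauliKraus p k a 0 * star (pauliKraus p k b 1) =
    if b = 1 - a then (if a = 1 then ((p 1 - p 2 : ℝ) : ℂ) else ((p 0 - p 3 : ℝ) : ℂ)) else 0 := by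
  have h0 := hp 0; have h1 := hp 1; have h2 := hp 2; have h3 := hp 3
  fin_cases a <;> fin_cases b <;>
    simp [pauliKraus, pauli, Fin.sum_univ_four, Matrix.one_apply, Complex.ext_iff,
      Real.mul_self_sqrt, sub_eq_add_neg, *]

/-- The n-fold Pauli channel applied to the matrix unit `E₀₁` (at the all-zeros and all-ones
strings) is supported on pairs `(s, complement of s)` with entry
`(p₀−p₃)^{n−w(s)} (p₁−p₂)^{w(s)}`. -/
theorem stmt17 (p : Fin 4 → ℝ) (hp : ∀ i, 0 ≤ p i) (hp1 : ∑ i, p i = 1) (n : ℕ) :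
    prodChannel (pauliKraus p) n
        (Matrix.single (fun _ => (0 : Fin 2)) (fun _ => (1 : Fin 2)) 1) =
      Matrix.of fun s t =>
        if t = (fun i => 1 - s i) then
          (((p 0 - p 3) ^ (n - hamW s) * (p 1 - p 2) ^ hamW s : ℝ) : ℂ)
        else 0 := by
  ext s t
  have key : prodChannel (pauliKraus p) n
      (Matrix.single (fun _ => (0 : Fin 2)) (fun _ => (1 : Fin 2)) 1) s t
      = ∏ i, ∑ k : Fin 4, pauliKraus p k (s i) 0 * star (pauliKraus p k (t i) 1) := by
    rw [prodChannel, Matrix.sum_apply]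
    have h1 : ∀ u : Fin n → Fin 4,
        (krausAt (pauliKraus p) u * Matrix.single (fun _ => (0:Fin 2)) (fun _ => (1:Fin 2)) 1
          * (krausAt (pauliKraus p) u)ᴴ : Matrix (Fin n → Fin 2) (Fin n → Fin 2) ℂ) s t
        = ∏ i, (pauliKraus p (u i) (s i) 0 * star (pauliKraus p (u i) (t i) 1)) := by
      intro u
      rw [mulE]
      simp [krausAt, Matrix.conjTranspose_apply, Finset.prod_mul_distrib]
    simp_rw [h1]
    rw [Finset.prod_univ_sum]
    simp
  rw [key]
  simp only [Matrix.of_apply]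
  simp_rw [site p hp]
  by_cases ht : t = fun i => 1 - s i
  · subst ht
    rw [if_pos rfl]
    simp only [eq_self_iff_true, if_true]
    rw [Finset.prod_ite, Finset.prod_const, Finset.prod_const]
    have hc : (Finset.univ.filter fun i => ¬ s i = 1).card = n - hamW s := by
      have := Finset.card_filter_add_card_filter_not (s := (Finset.univ : Finset (Fin n)))
        (p := fun i => s i = 1)
      simp only [Finset.card_univ, Fintype.card_fin] at this
      unfold hamW
      omega
    rw [hc]
    show _ = ((((p 0 - p 3) ^ (n - hamW s) * (p 1 - p 2) ^ hamW s : ℝ)) : ℂ)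
    unfold hamW
    push_cast
    ring
  · rw [if_neg ht]
    obtain ⟨i, hi⟩ := Function.ne_iff.mp ht
    exact Finset.prod_eq_zero (Finset.mem_univ i) (by rw [if_neg hi])

end
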